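/- Let h : ℝ × ℝ^m × ℝ → ℝ, (u,x,t) ↦ h(u,x,t), be continuously differentiable, let v : ℝ^m × ℝ → ℝ^m be continuously differentiable, and suppose there is a constant β > 0 such that ∂h/∂u(u,x,t) − ½ (div_x v)(x,t) ≥ β for all (u,x,t). Let φ₁, φ₂ : ℝ^m × ℝ → ℝ be continuously differentiable solutions of the reaction–convection equation ∂φ/∂t(x,t) + h(φ(x,t),x,t) + v(x,t)·∇φ(x,t) = 0, such that φ₁(·,t) − φ₂(·,t) is supported in a fixed compact set K ⊆ ℝ^m for every t. Then for all t ≥ 0, ∫_{ℝ^m} (φ₁(x,t) − φ₂(x,t))² dx ≤ e^{−2βt} ∫_{ℝ^m} (φ₁(x,0) − φ₂(x,0))² dx. -/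

import Mathlib

/-! The energy `E t = ∫ (φ₁ - φ₂)²` satisfies `E' ≤ -2βE`. Write `ψ = φ₁ - φ₂`. Differentiating
under the integral sign and using the equation, `E' = -2 ∫ ψ (h(φ₁) - h(φ₂)) - ∫ v ⬝ ∇(ψ²)`. Since
`ψ` has compact support, the transport term integrates by parts to `-∫ ψ² div v`, and the mean value
theorem turns the lower bound on `∂h/∂u` into `ψ (h(φ₁) - h(φ₂)) ≥ (β + ½ div v) ψ²`. Grönwall's
inequality then gives `E t ≤ exp (-2βt) E 0`. -/

open MeasureTheory RealInnerProductSpace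

/-- Spatial divergence of a time-dependent vector field on `ℝ^m`. -/
noncomputable def spatialDiv {m : ℕ}
    (v : EuclideanSpace ℝ (Fin m) × ℝ → EuclideanSpace ℝ (Fin m))
    (x : EuclideanSpace ℝ (Fin m)) (t : ℝ) : ℝ :=
  ∑ i, fderiv ℝ (fun y => v (y, t) i) x (EuclideanSpace.single i 1)

open Function Set

section IntegrationByParts

variable {E : Type*} [NormedAddCommGroup E] [NormedSpace ℝ E] [MeasurableSpace E] [BorelSpace E]
  {μ : Measure E}

theorem integrable_fderiv_apply_mul [IsFiniteMeasureOnCompacts μ] {f g : E → ℝ}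
    (hf : ContDiff ℝ 1 f) (hfs : HasCompactSupport f) (hg : Continuous g) (w : E) :
    Integrable (fun x => fderiv ℝ f x w * g x) μ :=
  (((hf.continuous_fderiv one_ne_zero).clm_apply continuous_const).mul hg)
    |>.integrable_of_hasCompactSupport (hfs.fderiv_apply (𝕜 := ℝ) w).mul_right

theorem integrable_mul_fderiv_apply [IsFiniteMeasureOnCompacts μ] {f g : E → ℝ}
    (hf : Continuous f) (hfs : HasCompactSupport f) (hg : ContDiff ℝ 1 g) (w : E) :
    Integrable (fun x => f x * fderiv ℝ g x w) μ :=
  (hf.mul ((hg.continuous_fderiv one_ne_zero).clm_apply continuous_const))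
    |>.integrable_of_hasCompactSupport hfs.mul_right

theorem integral_mul_fderiv_add_fderiv_mul_eq_zero [FiniteDimensional ℝ E] [μ.IsAddHaarMeasure]
    {f g : E → ℝ} (hf : ContDiff ℝ 1 f) (hfs : HasCompactSupport f) (hg : ContDiff ℝ 1 g) (w : E) :
    ∫ x, (f x * fderiv ℝ g x w + fderiv ℝ f x w * g x) ∂μ = 0 := by
  have hf'g := integrable_fderiv_apply_mul (μ := μ) hf hfs hg.continuous w
  have hfg' := integrable_mul_fderiv_apply (μ := μ) hf.continuous hfs hg w
  rw [integral_add hfg' hf'g, integral_mul_fderiv_eq_neg_fderiv_mul_of_integrable hf'g hfg'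
    ((hf.continuous.mul hg.continuous).integrable_of_hasCompactSupport hfs.mul_right)
    (fun x _ => hf.differentiable one_ne_zero x) (fun x _ => hg.differentiable one_ne_zero x),
    neg_add_cancel]

end IntegrationByParts

section SpatialDivergence

variable {m : ℕ} {v : EuclideanSpace ℝ (Fin m) × ℝ → EuclideanSpace ℝ (Fin m)} {t : ℝ}
  {g : EuclideanSpace ℝ (Fin m) → ℝ}

theorem mul_spatialDiv_add_fderiv_eq_sum (x : EuclideanSpace ℝ (Fin m)) :
    g x * spatialDiv v x t + fderiv ℝ g x (v (x, t)) = ∑ i,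
      (g x * fderiv ℝ (fun y => v (y, t) i) x (EuclideanSpace.single i 1)
        + fderiv ℝ g x (EuclideanSpace.single i 1) * v (x, t) i) := by
  conv_lhs => rw [← (EuclideanSpace.basisFun (Fin m) ℝ).sum_repr (v (x, t))]
  simp [spatialDiv, Finset.mul_sum, Finset.sum_add_distrib, mul_comm]

theorem integrable_mul_spatialDiv_add_fderiv (hv : ContDiff ℝ 1 fun y => v (y, t))
    (hg : ContDiff ℝ 1 g) (hgs : HasCompactSupport g) :
    Integrable fun x => g x * spatialDiv v x t + fderiv ℝ g x (v (x, t)) := by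
  have hvi := contDiff_euclidean.1 hv
  simp_rw [mul_spatialDiv_add_fderiv_eq_sum]
  exact integrable_finsetSum _ fun i _ =>
    (integrable_mul_fderiv_apply hg.continuous hgs (hvi i) _).add
      (integrable_fderiv_apply_mul hg hgs (hvi i).continuous _)

theorem integral_mul_spatialDiv_add_fderiv_eq_zero (hv : ContDiff ℝ 1 fun y => v (y, t))
    (hg : ContDiff ℝ 1 g) (hgs : HasCompactSupport g) :
    ∫ x, (g x * spatialDiv v x t + fderiv ℝ g x (v (x, t))) = 0 := by
  have hvi := contDiff_euclidean.1 hv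
  simp_rw [mul_spatialDiv_add_fderiv_eq_sum]
  rw [integral_finsetSum]
  · exact Finset.sum_eq_zero fun i _ =>
      integral_mul_fderiv_add_fderiv_mul_eq_zero hg hgs (hvi i) _
  · exact fun i _ => (integrable_mul_fderiv_apply hg.continuous hgs (hvi i) _).add
      (integrable_fderiv_apply_mul hg hgs (hvi i).continuous _)

end SpatialDivergence

theorem mul_sq_le_sub_mul_sub_of_le_deriv {f : ℝ → ℝ} (hf : Differentiable ℝ f) {c : ℝ}
    (hc : ∀ u, c ≤ deriv f u) (a b : ℝ) : c * (a - b) ^ 2 ≤ (a - b) * (f a - f b) := by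
  have hmono : Monotone fun u => f u - c * u := by
    refine monotone_of_deriv_nonneg (hf.sub (differentiable_id.const_mul c)) fun u => ?_
    have hd : HasDerivAt (fun u => f u - c * u) (deriv f u - c * 1) u :=
      (hf u).hasDerivAt.sub ((hasDerivAt_id' u).const_mul c)
    rw [hd.deriv]
    linarith [hc u]
  have key : 0 ≤ (a - b) * ((f a - c * a) - (f b - c * b)) := by
    rcases le_total a b with hab | hab
    · exact mul_nonneg_of_nonpos_of_nonpos (sub_nonpos.2 hab) (sub_nonpos.2 (hmono hab))
    · exact mul_nonneg (sub_nonneg.2 hab) (sub_nonneg.2 (hmono hab))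
  nlinarith [key]

theorem le_exp_mul_mul_of_hasDerivAt_le {f f' : ℝ → ℝ} {k : ℝ} (hf : ∀ t, HasDerivAt f (f' t) t)
    (hbound : ∀ t, f' t ≤ k * f t) {t : ℝ} (ht : 0 ≤ t) : f t ≤ Real.exp (k * t) * f 0 := by
  have := le_gronwallBound_of_liminf_deriv_right_le (δ := f 0) (ε := 0) (b := t)
    (fun s _ => (hf s).continuousAt.continuousWithinAt)
    (fun s _ _ hr => (hf s).hasDerivWithinAt.liminf_right_slope_le hr) le_rfl
    (fun s _ => by simpa using hbound s) t ⟨ht, le_rfl⟩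
  rwa [gronwallBound_ε0, sub_zero, mul_comm] at this

theorem DifferentiableAt.hasDerivAt_comp_prodMk {E G : Type*} [NormedAddCommGroup E]
    [NormedSpace ℝ E] [NormedAddCommGroup G] [NormedSpace ℝ G] {F : E × ℝ → G} {x : E} {t : ℝ}
    (hF : DifferentiableAt ℝ F (x, t)) :
    HasDerivAt (fun s => F (x, s)) (fderiv ℝ F (x, t) (0, 1)) t :=
  hF.hasFDerivAt.comp_hasDerivAt t ((hasDerivAt_const t x).prodMk (hasDerivAt_id t))

theorem hasDerivAt_integral_of_contDiff_of_support_subset {E G : Type*} [NormedAddCommGroup E]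
    [NormedSpace ℝ E] [FiniteDimensional ℝ E] [MeasurableSpace E] [BorelSpace E]
    [NormedAddCommGroup G] [NormedSpace ℝ G] {μ : Measure E} [IsFiniteMeasureOnCompacts μ]
    {F : E × ℝ → G} (hF : ContDiff ℝ 1 F) {K : Set E} (hK : IsCompact K)
    (hFK : ∀ t, support (fun x => F (x, t)) ⊆ K) (t₀ : ℝ) :
    Integrable (fun x => deriv (fun s => F (x, s)) t₀) μ ∧
      HasDerivAt (fun t => ∫ x, F (x, t) ∂μ) (∫ x, deriv (fun s => F (x, s)) t₀ ∂μ) t₀ := by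
  have hderiv (x : E) (t : ℝ) : HasDerivAt (fun s => F (x, s)) (fderiv ℝ F (x, t) (0, 1)) t :=
    (hF.differentiable one_ne_zero _).hasDerivAt_comp_prodMk
  simp_rw [fun x => (hderiv x t₀).deriv]
  have hvanish {x : E} (hx : x ∉ K) (t : ℝ) : F (x, t) = 0 :=
    notMem_support.mp fun h => hx (hFK t h)
  have hFc := hF.continuous
  have hF'c : Continuous fun p : E × ℝ => fderiv ℝ F p (0, 1) :=
    (hF.continuous_fderiv one_ne_zero).clm_apply continuous_const
  obtain ⟨C, hC⟩ :=
    (hK.prod (isCompact_Icc (a := t₀ - 1) (b := t₀ + 1))).exists_bound_of_continuousOn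
      hF'c.continuousOn
  refine hasDerivAt_integral_of_dominated_loc_of_deriv_le (Metric.ball_mem_nhds t₀ one_pos)
    (.of_forall fun t => (by fun_prop : Continuous fun x => F (x, t)).aestronglyMeasurable)
    ((by fun_prop : Continuous fun x => F (x, t₀)).integrable_of_hasCompactSupport
      (.intro hK fun x hx => hvanish hx t₀))
    (hF'c.comp (by fun_prop)).aestronglyMeasurable (bound := K.indicator fun _ => C)
    (.of_forall fun x t ht => ?_) ((integrableOn_const hK.measure_lt_top.ne).integrable_indicator
      hK.measurableSet) (.of_forall fun x t _ => hderiv x t)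
  by_cases hx : x ∈ K
  · rw [indicator_of_mem hx]
    rw [Metric.mem_ball, Real.dist_eq, abs_lt] at ht
    exact hC (x, t) ⟨hx, by constructor <;> linarith [ht.1, ht.2]⟩
  · rw [indicator_of_notMem hx, ← (hderiv x t).deriv]
    simp [hvanish hx]

section ReactionConvection

variable {m : ℕ} {h : ℝ → EuclideanSpace ℝ (Fin m) → ℝ → ℝ}
  {v : EuclideanSpace ℝ (Fin m) × ℝ → EuclideanSpace ℝ (Fin m)}
  {φ φ₁ φ₂ : EuclideanSpace ℝ (Fin m) × ℝ → ℝ}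

def IsReactionConvectionSolution (h : ℝ → EuclideanSpace ℝ (Fin m) → ℝ → ℝ)
    (v : EuclideanSpace ℝ (Fin m) × ℝ → EuclideanSpace ℝ (Fin m))
    (φ : EuclideanSpace ℝ (Fin m) × ℝ → ℝ) : Prop :=
  ∀ x t, deriv (fun s => φ (x, s)) t + h (φ (x, t)) x t
    + ⟪v (x, t), gradient (fun y => φ (y, t)) x⟫ = 0

theorem IsReactionConvectionSolution.deriv_eq (hφ : IsReactionConvectionSolution h v φ)
    (x : EuclideanSpace ℝ (Fin m)) (t : ℝ) :
    deriv (fun s => φ (x, s)) t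
      = -h (φ (x, t)) x t - fderiv ℝ (fun y => φ (y, t)) x (v (x, t)) := by
  have := hφ x t
  rw [inner_gradient_right, conj_trivial] at this
  linarith

theorem IsReactionConvectionSolution.deriv_sub_sq (hφ₁ : IsReactionConvectionSolution h v φ₁)
    (hφ₂ : IsReactionConvectionSolution h v φ₂) (hd₁ : Differentiable ℝ φ₁)
    (hd₂ : Differentiable ℝ φ₂) (x : EuclideanSpace ℝ (Fin m)) (t : ℝ) :
    deriv (fun s => (φ₁ (x, s) - φ₂ (x, s)) ^ 2) t
      = -2 * (φ₁ (x, t) - φ₂ (x, t)) * (h (φ₁ (x, t)) x t - h (φ₂ (x, t)) x t)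
        - fderiv ℝ (fun y => (φ₁ (y, t) - φ₂ (y, t)) ^ 2) x (v (x, t)) := by
  have ht : HasDerivAt (fun s => (φ₁ (x, s) - φ₂ (x, s)) ^ 2)
      (2 * (φ₁ (x, t) - φ₂ (x, t))
        * (deriv (fun s => φ₁ (x, s)) t - deriv (fun s => φ₂ (x, s)) t)) t := by
    have hs₁ := (hd₁ (x, t)).hasDerivAt_comp_prodMk.differentiableAt
    have hs₂ := (hd₂ (x, t)).hasDerivAt_comp_prodMk.differentiableAt
    exact ((hs₁.hasDerivAt.fun_sub hs₂.hasDerivAt).fun_pow 2).congr_deriv (by norm_num)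
  have hx : fderiv ℝ (fun y => (φ₁ (y, t) - φ₂ (y, t)) ^ 2) x (v (x, t))
      = 2 * (φ₁ (x, t) - φ₂ (x, t)) * (fderiv ℝ (fun y => φ₁ (y, t)) x (v (x, t))
        - fderiv ℝ (fun y => φ₂ (y, t)) x (v (x, t))) := by
    have hy₁ : Differentiable ℝ fun y => φ₁ (y, t) := by fun_prop
    have hy₂ : Differentiable ℝ fun y => φ₂ (y, t) := by fun_prop
    rw [(((hy₁ x).hasFDerivAt.fun_sub (hy₂ x).hasFDerivAt).pow 2).fderiv]
    simp
  rw [ht.deriv, hx, hφ₁.deriv_eq, hφ₂.deriv_eq]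
  ring

theorem IsReactionConvectionSolution.deriv_sub_sq_le {β : ℝ}
    (hh : ∀ x t, Differentiable ℝ fun u => h u x t)
    (hcontr : ∀ u x t, β ≤ deriv (fun w => h w x t) u - (1 / 2) * spatialDiv v x t)
    (hφ₁ : IsReactionConvectionSolution h v φ₁) (hφ₂ : IsReactionConvectionSolution h v φ₂)
    (hd₁ : Differentiable ℝ φ₁) (hd₂ : Differentiable ℝ φ₂) (x : EuclideanSpace ℝ (Fin m))
    (t : ℝ) :
    deriv (fun s => (φ₁ (x, s) - φ₂ (x, s)) ^ 2) t ≤ -2 * β * (φ₁ (x, t) - φ₂ (x, t)) ^ 2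
      - ((φ₁ (x, t) - φ₂ (x, t)) ^ 2 * spatialDiv v x t
        + fderiv ℝ (fun y => (φ₁ (y, t) - φ₂ (y, t)) ^ 2) x (v (x, t))) := by
  have hmono := mul_sq_le_sub_mul_sub_of_le_deriv (hh x t) (c := β + spatialDiv v x t / 2)
    (fun u => by linarith [hcontr u x t]) (φ₁ (x, t)) (φ₂ (x, t))
  rw [hφ₁.deriv_sub_sq hφ₂ hd₁ hd₂]
  linarith

theorem IsReactionConvectionSolution.integral_deriv_sub_sq_le {β : ℝ} (hv : ContDiff ℝ 1 v)
    (hh : ∀ x t, Differentiable ℝ fun u => h u x t)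
    (hcontr : ∀ u x t, β ≤ deriv (fun w => h w x t) u - (1 / 2) * spatialDiv v x t)
    (hφ₁ : IsReactionConvectionSolution h v φ₁) (hφ₂ : IsReactionConvectionSolution h v φ₂)
    (hc₁ : ContDiff ℝ 1 φ₁) (hc₂ : ContDiff ℝ 1 φ₂) {t : ℝ}
    (hs : HasCompactSupport fun x => φ₁ (x, t) - φ₂ (x, t))
    (hint : Integrable fun x => deriv (fun s => (φ₁ (x, s) - φ₂ (x, s)) ^ 2) t) :
    ∫ x, deriv (fun s => (φ₁ (x, s) - φ₂ (x, s)) ^ 2) t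
      ≤ -2 * β * ∫ x, (φ₁ (x, t) - φ₂ (x, t)) ^ 2 := by
  set g := fun y => (φ₁ (y, t) - φ₂ (y, t)) ^ 2
  have hg : ContDiff ℝ 1 g := by fun_prop
  have hgs : HasCompactSupport g := hs.mono (support_pow _ two_ne_zero).le
  have hvt : ContDiff ℝ 1 fun y => v (y, t) := by fun_prop
  have hgi : Integrable g := hg.continuous.integrable_of_hasCompactSupport hgs
  have hdiv := integrable_mul_spatialDiv_add_fderiv hvt hg hgs
  calc _ ≤ ∫ x, (-2 * β * g x - (g x * spatialDiv v x t + fderiv ℝ g x (v (x, t)))) :=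
        integral_mono hint ((hgi.const_mul _).sub hdiv) fun x =>
          hφ₁.deriv_sub_sq_le hh hcontr hφ₂ (hc₁.differentiable one_ne_zero)
            (hc₂.differentiable one_ne_zero) x t
    _ = -2 * β * ∫ x, g x := by
        rw [integral_sub (hgi.const_mul _) hdiv, integral_const_mul,
          integral_mul_spatialDiv_add_fderiv_eq_zero hvt hg hgs, sub_zero]

end ReactionConvection

theorem reaction_convection_contraction_general {m : ℕ} (β : ℝ)
    (h : ℝ → EuclideanSpace ℝ (Fin m) → ℝ → ℝ)
    (v : EuclideanSpace ℝ (Fin m) × ℝ → EuclideanSpace ℝ (Fin m))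
    (hh : ContDiff ℝ 1 (fun q : ℝ × EuclideanSpace ℝ (Fin m) × ℝ => h q.1 q.2.1 q.2.2))
    (hv : ContDiff ℝ 1 v)
    (hcontr : ∀ (u : ℝ) (x : EuclideanSpace ℝ (Fin m)) (t : ℝ),
      β ≤ deriv (fun w => h w x t) u - (1 / 2) * spatialDiv v x t)
    (φ₁ φ₂ : EuclideanSpace ℝ (Fin m) × ℝ → ℝ)
    (hφ₁ : ContDiff ℝ 1 φ₁) (hφ₂ : ContDiff ℝ 1 φ₂)
    (hpde₁ : ∀ x t, deriv (fun s => φ₁ (x, s)) t + h (φ₁ (x, t)) x t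
      + ⟪v (x, t), gradient (fun y => φ₁ (y, t)) x⟫ = 0)
    (hpde₂ : ∀ x t, deriv (fun s => φ₂ (x, s)) t + h (φ₂ (x, t)) x t
      + ⟪v (x, t), gradient (fun y => φ₂ (y, t)) x⟫ = 0)
    (K : Set (EuclideanSpace ℝ (Fin m))) (hK : IsCompact K)
    (hsupp : ∀ t, Function.support (fun x => φ₁ (x, t) - φ₂ (x, t)) ⊆ K) :
    ∀ t ≥ (0 : ℝ),
      ∫ x, (φ₁ (x, t) - φ₂ (x, t)) ^ 2
        ≤ Real.exp (-2 * β * t) * ∫ x, (φ₁ (x, 0) - φ₂ (x, 0)) ^ 2 := by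
  intro t ht
  have hh' (x : EuclideanSpace ℝ (Fin m)) (t : ℝ) : Differentiable ℝ fun u => h u x t :=
    (hh.differentiable one_ne_zero).comp (f := fun u => (u, x, t)) (by fun_prop)
  have henergy := hasDerivAt_integral_of_contDiff_of_support_subset (μ := volume)
    ((hφ₁.sub hφ₂).pow 2) hK fun t => (support_pow _ two_ne_zero).trans_subset (hsupp t)
  refine le_exp_mul_mul_of_hasDerivAt_le (fun s => (henergy s).2) (fun s => ?_) ht
  exact IsReactionConvectionSolution.integral_deriv_sub_sq_le hv hh' hcontr hpde₁ hpde₂ hφ₁ hφ₂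
    (.intro hK fun x hx => notMem_support.mp fun h' => hx (hsupp s h')) (henergy s).1

theorem reaction_convection_contraction {m : ℕ} (β : ℝ) (hβ : 0 < β)
    (h : ℝ → EuclideanSpace ℝ (Fin m) → ℝ → ℝ)
    (v : EuclideanSpace ℝ (Fin m) × ℝ → EuclideanSpace ℝ (Fin m))
    (hh : ContDiff ℝ 1 (fun q : ℝ × EuclideanSpace ℝ (Fin m) × ℝ => h q.1 q.2.1 q.2.2))
    (hv : ContDiff ℝ 1 v)
    (hcontr : ∀ (u : ℝ) (x : EuclideanSpace ℝ (Fin m)) (t : ℝ),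
      β ≤ deriv (fun w => h w x t) u - (1 / 2) * spatialDiv v x t)
    (φ₁ φ₂ : EuclideanSpace ℝ (Fin m) × ℝ → ℝ)
    (hφ₁ : ContDiff ℝ 1 φ₁) (hφ₂ : ContDiff ℝ 1 φ₂)
    (hpde₁ : ∀ x t, deriv (fun s => φ₁ (x, s)) t + h (φ₁ (x, t)) x t
      + ⟪v (x, t), gradient (fun y => φ₁ (y, t)) x⟫ = 0)
    (hpde₂ : ∀ x t, deriv (fun s => φ₂ (x, s)) t + h (φ₂ (x, t)) x t
      + ⟪v (x, t), gradient (fun y => φ₂ (y, t)) x⟫ = 0)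
    (K : Set (EuclideanSpace ℝ (Fin m))) (hK : IsCompact K)
    (hsupp : ∀ t, Function.support (fun x => φ₁ (x, t) - φ₂ (x, t)) ⊆ K) :
    ∀ t ≥ (0 : ℝ),
      ∫ x, (φ₁ (x, t) - φ₂ (x, t)) ^ 2
        ≤ Real.exp (-2 * β * t) * ∫ x, (φ₁ (x, 0) - φ₂ (x, 0)) ^ 2 :=
  reaction_convection_contraction_general β h v hh hv hcontr φ₁ φ₂ hφ₁ hφ₂ hpde₁ hpde₂ K hK hsupp
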